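/- arXiv:1310.2800 — 2 statements merged into one kernel-verified Lean document; each statement's English description precedes it below -/
import Mathlib

section
/- Let l ≥ 5 be a prime and F a field such that the l-th cyclotomic polynomial Φ_l(X) is irreducible in F[x]. If f(x), g(x) ∈ F[x] are relatively prime polynomials, then the degree of every irreducible factor of Φ_l(f(x), g(x)) in F[x] is divisible by l−1. -/
/-!
Let `h` be an irreducible factor of `Φ_l(f, g)` and let `a`, `b` be the images of `f`, `g` in the
field `F[x]/(h)`. They are coprime there, so `Φ_l(a, b) = 0` forces `b ≠ 0`, and then `a / b` is a
root of the irreducible polynomial `Φ_l`. Hence `l - 1 = [F(a/b) : F]` divides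
`[F[x]/(h) : F] = deg h`.
-/

open Polynomial

/-- The homogenized cyclotomic polynomial `Φ_l(f,g) = ∑_{j=0}^{l-1} f^j g^{l-1-j}`. -/
noncomputable def PhiH {F : Type*} [Field F] (l : ℕ) (f g : Polynomial F) : Polynomial F :=
  ∑ j ∈ Finset.range l, f ^ j * g ^ (l - 1 - j)

open Finset

theorem natDegree_geom_sum_X {R : Type*} [CommRing R] [Nontrivial R] (n : ℕ) :
    (∑ i ∈ range n, (X : R[X]) ^ i).natDegree = n - 1 := by
  rcases Nat.eq_zero_or_pos n with rfl | hn
  · simp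
  have hdeg := (monic_geom_sum_X (R := R) hn.ne').natDegree_mul (monic_X_sub_C 1)
  rw [C_1, geom_sum_mul, ← C_1, natDegree_X_pow_sub_C, natDegree_X_sub_C] at hdeg
  omega

theorem Irreducible.natDegree_dvd_finrank_of_aeval_eq_zero {F L : Type*} [Field F] [Field L]
    [Algebra F L] {p : F[X]} (hp : Irreducible p) {x : L}
    (hx : aeval x p = 0) : p.natDegree ∣ Module.finrank F L := by
  have hint : IsIntegral F x := IsAlgebraic.isIntegral ⟨p, hp.ne_zero, hx⟩
  rw [minpoly.Irreducible.eq_minpoly hp hx, natDegree_C_mul (leadingCoeff_ne_zero.2 hp.ne_zero)]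
  exact minpoly.degree_dvd hint

theorem geom_sum₂_mul_eq_geom_sum_mul_pow {R : Type*} [CommSemiring R] (z y : R) (n : ℕ) :
    ∑ i ∈ range n, (z * y) ^ i * y ^ (n - 1 - i) = (∑ i ∈ range n, z ^ i) * y ^ (n - 1) := by
  rw [sum_mul]
  refine sum_congr rfl fun i hi => ?_
  rw [mul_pow, mul_assoc, ← pow_add, Nat.add_sub_of_le (by grind)]

theorem right_ne_zero_of_geom_sum₂_eq_zero {R : Type*} [CommRing R] [IsDomain R] {x y : R}
    (hxy : IsCoprime x y) {n : ℕ} (hn : n ≠ 0)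
    (h : ∑ i ∈ range n, x ^ i * y ^ (n - 1 - i) = 0) : y ≠ 0 := by
  rintro rfl
  rw [geom_sum₂_comm] at h
  have hx : x ^ (n - 1) = 0 := by simpa [zero_pow_eq, Nat.pos_of_ne_zero hn] using h
  exact not_isCoprime_zero_zero (eq_zero_of_pow_eq_zero hx ▸ hxy)

theorem geom_sum_div_eq_zero_of_geom_sum₂_eq_zero {K : Type*} [Field K] {x y : K} (hy : y ≠ 0)
    {n : ℕ} (h : ∑ i ∈ range n, x ^ i * y ^ (n - 1 - i) = 0) : ∑ i ∈ range n, (x / y) ^ i = 0 := by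
  rw [← div_mul_cancel₀ x hy, geom_sum₂_mul_eq_geom_sum_mul_pow] at h
  exact (mul_eq_zero.1 h).resolve_right (pow_ne_zero _ hy)

theorem natDegree_factor_PhiH_dvd_general {F : Type*} [Field F] (l : ℕ)
    (hirr : Irreducible (∑ i ∈ Finset.range l, (X : Polynomial F) ^ i))
    (f g : Polynomial F) (hfg : IsCoprime f g)
    (h : Polynomial F) (hh : Irreducible h) (hdvd : h ∣ PhiH l f g) :
    (l - 1) ∣ h.natDegree := by
  have : Fact (Irreducible h) := ⟨hh⟩
  have hl : l ≠ 0 := by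
    rintro rfl
    exact hirr.ne_zero (by simp)
  have hroot : ∑ j ∈ range l, AdjoinRoot.mk h f ^ j * AdjoinRoot.mk h g ^ (l - 1 - j) = 0 := by
    simpa [PhiH] using AdjoinRoot.mk_eq_zero.2 hdvd
  have hg := right_ne_zero_of_geom_sum₂_eq_zero (hfg.map (AdjoinRoot.mk h)) hl hroot
  have hζ : aeval (AdjoinRoot.mk h f / AdjoinRoot.mk h g) (∑ i ∈ range l, (X : F[X]) ^ i) = 0 := by
    simpa using geom_sum_div_eq_zero_of_geom_sum₂_eq_zero hg hroot
  rw [← natDegree_geom_sum_X (R := F), ← finrank_quotient_span_eq_natDegree (f := h)]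
  exact hirr.natDegree_dvd_finrank_of_aeval_eq_zero hζ

theorem natDegree_factor_PhiH_dvd {F : Type*} [Field F] (l : ℕ) (hl : l.Prime) (hl5 : 5 ≤ l)
    (hirr : Irreducible (∑ i ∈ Finset.range l, (X : Polynomial F) ^ i))
    (f g : Polynomial F) (hfg : IsCoprime f g)
    (h : Polynomial F) (hh : Irreducible h) (hdvd : h ∣ PhiH l f g) :
    (l - 1) ∣ h.natDegree :=
  natDegree_factor_PhiH_dvd_general l hirr f g hfg h hh hdvd
end

section
/- Let l ≥ 5 be a prime and F a field such that the l-th cyclotomic polynomial Φ_l(X) is irreducible in F[x]. Assume the standing factorization hypothesis, assume that the formal derivative f′ ≠ 0 or g′ ≠ 0, and assume n ≤ (l² − 4l + 1)/2. Then θ := max(deg f, deg g) satisfies θ ≤ 2n − 1. -/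
open Polynomial

/-- Two (invertible) matrices `(a₁,b₁;c₁,d₁)` and `(a₂,b₂;c₂,d₂)` are *essentially distinct*
if there are no `α ∈ F*` and root of unity `μ ∈ F` with
`(a₂,b₂;c₂,d₂) = α·(μa₁,μb₁;c₁,d₁)` or `(a₂,b₂;c₂,d₂) = α·(μc₁,μd₁;a₁,b₁)`. -/
def EssDistinct {F : Type*} [Field F] (a₁ b₁ c₁ d₁ a₂ b₂ c₂ d₂ : F) : Prop :=
  ¬ ∃ (α μ : F) (k : ℕ), α ≠ 0 ∧ 0 < k ∧ μ ^ k = 1 ∧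
      ((a₂ = α * (μ * a₁) ∧ b₂ = α * (μ * b₁) ∧ c₂ = α * c₁ ∧ d₂ = α * d₁) ∨
       (a₂ = α * (μ * c₁) ∧ b₂ = α * (μ * d₁) ∧ c₂ = α * a₁ ∧ d₂ = α * b₁))

/-!
Since `Φ_l` has no root in `F`, the leading terms in `Φ_l(p, q)` cannot cancel, so
`deg Φ_l(p, q) = (l - 1) · max (deg p) (deg q)`. Comparing degrees in the factorization gives
`(l - 1) θ = l · deg Ψ + R (l - 1)` with `R = ∑ rᵢ ≥ n`. Mason–Stothers for
`f^l + (-g^l) + (g^l - f^l) = 0`, where `f^l - g^l = (f - g) Φ_l(f, g)`, bounds `l θ + 1` by the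
degree of the radical of `f g (f - g) Ψ ∏ Φ_l(aᵢx + bᵢ, cᵢx + dᵢ)`, hence by
`3θ + deg Ψ + n (l - 1)`. As `l` is prime to `l - 1`, the degree relation forces `θ = R + l k` and
`deg Ψ = (l - 1) k`; then `k ≥ 1` contradicts `2n ≤ l² - 4l + 1`, while `k = 0` gives
`(l - 3) θ < n (l - 1) ≤ 2n (l - 3)`.
-/

open Finset UniqueFactorizationMonoid

section Field

variable {F : Type*} [Field F] {l : ℕ}

theorem geom_sum_ne_zero_of_irreducible (hl : l.Prime) (hl3 : 3 ≤ l)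
    (hirr : Irreducible (∑ i ∈ range l, (X : F[X]) ^ i)) (u : F) :
    ∑ i ∈ range l, u ^ i ≠ 0 := by
  have : Fact l.Prime := ⟨hl⟩
  rw [← cyclotomic_prime] at hirr
  have hdeg : (cyclotomic l F).natDegree ≠ 1 := by
    rw [natDegree_cyclotomic, Nat.totient_prime hl]
    omega
  simpa [IsRoot, cyclotomic_prime, eval_finsetSum] using
    hirr.not_isRoot_of_natDegree_ne_one hdeg (x := u)

theorem geom_sum₂_ne_zero (hroot : ∀ u : F, ∑ i ∈ range l, u ^ i ≠ 0) {A B : F}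
    (hAB : A ≠ 0 ∨ B ≠ 0) : ∑ j ∈ range l, A ^ j * B ^ (l - 1 - j) ≠ 0 := by
  wlog hB : B ≠ 0 generalizing A B
  · rw [geom_sum₂_comm]
    exact this hAB.symm (hAB.resolve_right hB)
  have hterm : ∀ j ∈ range l, A ^ j * B ^ (l - 1 - j) = B ^ (l - 1) * (A / B) ^ j := by
    intro j hj
    rw [div_pow, ← pow_mul_pow_sub B (show j ≤ l - 1 by grind)]
    field_simp
  rw [sum_congr rfl hterm, ← mul_sum]
  exact mul_ne_zero (pow_ne_zero _ hB) (hroot _)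

theorem PhiH_mul_sub (l : ℕ) (p q : F[X]) : PhiH l p q * (p - q) = p ^ l - q ^ l :=
  geom_sum₂_mul p q l

theorem natDegree_PhiH_le {p q : F[X]} {θ : ℕ} (hp : p.natDegree ≤ θ) (hq : q.natDegree ≤ θ) :
    (PhiH l p q).natDegree ≤ (l - 1) * θ := by
  refine natDegree_sum_le_of_forall_le _ _ fun j hj => ?_
  have hj : j ≤ l - 1 := by grind
  calc (p ^ j * q ^ (l - 1 - j)).natDegree ≤ j * θ + (l - 1 - j) * θ :=
        natDegree_mul_le_of_le (natDegree_pow_le_of_le j hp) (natDegree_pow_le_of_le _ hq)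
    _ = (l - 1) * θ := by rw [← add_mul, Nat.add_sub_cancel' hj]

theorem coeff_PhiH_of_natDegree_le {p q : F[X]} {θ : ℕ} (hp : p.natDegree ≤ θ)
    (hq : q.natDegree ≤ θ) :
    (PhiH l p q).coeff ((l - 1) * θ) =
      ∑ j ∈ range l, p.coeff θ ^ j * q.coeff θ ^ (l - 1 - j) := by
  rw [PhiH, finsetSum_coeff]
  refine sum_congr rfl fun j hj => ?_
  have hj : j ≤ l - 1 := by grind
  rw [show (l - 1) * θ = j * θ + (l - 1 - j) * θ by rw [← add_mul, Nat.add_sub_cancel' hj],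
    coeff_mul_add_eq_of_natDegree_le (natDegree_pow_le_of_le j hp) (natDegree_pow_le_of_le _ hq),
    coeff_pow_of_natDegree_le hp, coeff_pow_of_natDegree_le hq]

theorem coeff_PhiH_ne_zero (hroot : ∀ u : F, ∑ i ∈ range l, u ^ i ≠ 0) {p q : F[X]} {θ : ℕ}
    (hp : p.natDegree ≤ θ) (hq : q.natDegree ≤ θ) (hθ : p.coeff θ ≠ 0 ∨ q.coeff θ ≠ 0) :
    (PhiH l p q).coeff ((l - 1) * θ) ≠ 0 := by
  rw [coeff_PhiH_of_natDegree_le hp hq]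
  exact geom_sum₂_ne_zero hroot hθ

theorem natDegree_PhiH (hroot : ∀ u : F, ∑ i ∈ range l, u ^ i ≠ 0) {p q : F[X]} {θ : ℕ}
    (hp : p.natDegree ≤ θ) (hq : q.natDegree ≤ θ) (hθ : p.coeff θ ≠ 0 ∨ q.coeff θ ≠ 0) :
    (PhiH l p q).natDegree = (l - 1) * θ :=
  natDegree_eq_of_le_of_coeff_ne_zero (natDegree_PhiH_le hp hq) (coeff_PhiH_ne_zero hroot hp hq hθ)

theorem coeff_max_natDegree_ne_zero {p q : F[X]} (hp : p ≠ 0) (hq : q ≠ 0) :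
    p.coeff (max p.natDegree q.natDegree) ≠ 0 ∨ q.coeff (max p.natDegree q.natDegree) ≠ 0 := by
  rcases le_total p.natDegree q.natDegree with h | h
  · right; rw [max_eq_right h]; exact leadingCoeff_ne_zero.mpr hq
  · left; rw [max_eq_left h]; exact leadingCoeff_ne_zero.mpr hp

theorem natDegree_PhiH_linear (hroot : ∀ u : F, ∑ i ∈ range l, u ^ i ≠ 0) {a b c d : F}
    (hdet : a * d - b * c ≠ 0) :
    (PhiH l (C a * X + C b) (C c * X + C d)).natDegree = l - 1 := by
  have hac : a ≠ 0 ∨ c ≠ 0 := by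
    by_contra! h
    exact hdet (by simp [h.1, h.2])
  rw [natDegree_PhiH hroot natDegree_linear_le natDegree_linear_le (by simpa using hac), mul_one]

theorem derivative_eq_zero_of_isUnit {p : F[X]} (hp : IsUnit p) : derivative p = 0 :=
  derivative_of_natDegree_zero (natDegree_eq_zero_of_isUnit hp)

theorem ne_zero_and_ne_zero_of_isCoprime {f g : F[X]} (hfg : IsCoprime f g)
    (hder : derivative f ≠ 0 ∨ derivative g ≠ 0) : f ≠ 0 ∧ g ≠ 0 := by
  refine ⟨?_, ?_⟩ <;> rintro rfl
  · simp [derivative_eq_zero_of_isUnit (isCoprime_zero_left.mp hfg)] at hder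
  · simp [derivative_eq_zero_of_isUnit (isCoprime_zero_right.mp hfg)] at hder

theorem pow_ne_pow_of_isCoprime {f g : F[X]} (hl : l ≠ 0) (hfg : IsCoprime f g)
    (hder : derivative f ≠ 0 ∨ derivative g ≠ 0) : f ^ l ≠ g ^ l := by
  intro h
  have hf : IsUnit f := hfg.pow_right.isUnit_of_dvd' dvd_rfl (h ▸ dvd_pow_self f hl)
  have hg : IsUnit g := hfg.pow_left.isUnit_of_dvd' (h ▸ dvd_pow_self g hl) dvd_rfl
  simp [derivative_eq_zero_of_isUnit hf, derivative_eq_zero_of_isUnit hg] at hder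

theorem natDegree_C_mul_pow_mul_prod_pow {α : F} (hα : α ≠ 0) {Ψ : F[X]} (hΨ : Ψ ≠ 0) (l : ℕ)
    {ι : Type*} (s : Finset ι) {Φ : ι → F[X]} (hΦ : ∀ i ∈ s, Φ i ≠ 0) (r : ι → ℕ) :
    (C α * Ψ ^ l * ∏ i ∈ s, Φ i ^ r i).natDegree =
      l * Ψ.natDegree + ∑ i ∈ s, r i * (Φ i).natDegree := by
  rw [natDegree_mul (mul_ne_zero (C_ne_zero.mpr hα) (pow_ne_zero l hΨ))
      (prod_ne_zero_iff.mpr fun i hi => pow_ne_zero _ (hΦ i hi)),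
    natDegree_C_mul hα, natDegree_pow, natDegree_prod _ _ fun i hi => pow_ne_zero _ (hΦ i hi)]
  simp only [natDegree_pow]

variable [DecidableEq F]

theorem natDegree_radical_pow_le (p : F[X]) (n : ℕ) : (radical (p ^ n)).natDegree ≤ p.natDegree :=
  (natDegree_le_of_dvd radical_pow_dvd radical_ne_zero).trans natDegree_radical_le

theorem natDegree_radical_mul_le (p q : F[X]) :
    (radical (p * q)).natDegree ≤ (radical p).natDegree + (radical q).natDegree := by
  rw [← natDegree_mul radical_ne_zero radical_ne_zero]
  exact natDegree_le_of_dvd radical_mul_dvd (mul_ne_zero radical_ne_zero radical_ne_zero)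

theorem natDegree_radical_prod_le {ι : Type*} (s : Finset ι) (p : ι → F[X]) :
    (radical (∏ i ∈ s, p i)).natDegree ≤ ∑ i ∈ s, (radical (p i)).natDegree := by
  rw [← natDegree_prod _ _ fun _ _ => radical_ne_zero]
  exact natDegree_le_of_dvd radical_prod_dvd (prod_ne_zero_iff.mpr fun _ _ => radical_ne_zero)

theorem mul_max_natDegree_add_one_le_radical {f g : F[X]} (hl : (l : F) ≠ 0)
    (hfg : IsCoprime f g) (hder : derivative f ≠ 0 ∨ derivative g ≠ 0) :
    l * max f.natDegree g.natDegree + 1 ≤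
      (radical (f ^ l * g ^ l * (f ^ l - g ^ l))).natDegree := by
  obtain ⟨hf, hg⟩ := ne_zero_and_ne_zero_of_isCoprime hfg hder
  have hsub : g ^ l - f ^ l ≠ 0 :=
    sub_ne_zero.mpr (pow_ne_pow_of_isCoprime (by rintro rfl; simp at hl) hfg hder).symm
  have hrw : f ^ l * -g ^ l * (g ^ l - f ^ l) = f ^ l * g ^ l * (f ^ l - g ^ l) := by ring
  rcases Polynomial.abc (pow_ne_zero l hf) (neg_ne_zero.mpr (pow_ne_zero l hg)) hsub
      hfg.pow.neg_right (by ring) with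
    ⟨hfl, hgl, -⟩ | ⟨hfl, hgl, -⟩
  · rw [hrw, natDegree_pow] at hfl
    rw [hrw, natDegree_neg, natDegree_pow] at hgl
    rcases le_total f.natDegree g.natDegree with h | h
    · rwa [max_eq_right h]
    · rwa [max_eq_left h]
  · rw [derivative_pow] at hfl
    rw [derivative_neg, neg_eq_zero, derivative_pow] at hgl
    simp only [mul_eq_zero, C_eq_zero, hl, pow_eq_zero_iff', hf, hg, ne_eq, false_and,
      or_false, false_or] at hfl hgl
    exact absurd ⟨hfl, hgl⟩ (not_and_or.mpr hder)

theorem natDegree_radical_pow_mul_pow_mul_sub_le (l : ℕ) (f g : F[X]) :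
    (radical (f ^ l * g ^ l * (f ^ l - g ^ l))).natDegree ≤
      f.natDegree + g.natDegree + (f - g).natDegree + (radical (PhiH l f g)).natDegree := by
  rw [← PhiH_mul_sub]
  have := natDegree_radical_mul_le (f ^ l * g ^ l) (PhiH l f g * (f - g))
  have := natDegree_radical_mul_le (f ^ l) (g ^ l)
  have := natDegree_radical_mul_le (PhiH l f g) (f - g)
  have := natDegree_radical_pow_le f l
  have := natDegree_radical_pow_le g l
  have := natDegree_radical_le (a := f - g)
  omega

theorem natDegree_radical_C_mul_pow_mul_prod_pow_le (α : F) (Ψ : F[X]) (l : ℕ) {ι : Type*}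
    (s : Finset ι) (Φ : ι → F[X]) (r : ι → ℕ) :
    (radical (C α * Ψ ^ l * ∏ i ∈ s, Φ i ^ r i)).natDegree ≤
      Ψ.natDegree + ∑ i ∈ s, (Φ i).natDegree := by
  have := natDegree_radical_mul_le (C α * Ψ ^ l) (∏ i ∈ s, Φ i ^ r i)
  have := natDegree_radical_mul_le (C α) (Ψ ^ l)
  have := (natDegree_radical_le (a := C α)).trans (natDegree_C α).le
  have := natDegree_radical_pow_le Ψ l
  have := (natDegree_radical_prod_le s fun i => Φ i ^ r i).trans
    (sum_le_sum fun i _ => natDegree_radical_pow_le (Φ i) (r i))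
  omega

end Field

theorem le_two_mul_sub_one_of_mul_add_one_le {l n R θ d : ℕ} (hl5 : 5 ≤ l) (hRn : n ≤ R)
    (hdeg : (l - 1) * θ = l * d + R * (l - 1))
    (hmason : l * θ + 1 ≤ 3 * θ + d + n * (l - 1))
    (hn : 2 * n ≤ l ^ 2 - 4 * l + 1) : θ ≤ 2 * n - 1 := by
  have hRθ : R ≤ θ := by
    by_contra! h
    have := Nat.mul_lt_mul_of_pos_left h (show 0 < l - 1 by omega)
    nlinarith
  obtain ⟨k, hk⟩ : l ∣ θ - R := by
    have hcop : Nat.Coprime l (l - 1) :=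
      (Nat.coprime_self_sub_right (by omega)).mpr (Nat.coprime_one_right _)
    refine hcop.dvd_of_dvd_mul_left ⟨d, ?_⟩
    rw [Nat.mul_sub, hdeg, mul_comm R]
    omega
  obtain rfl : θ = R + l * k := by omega
  obtain rfl : d = (l - 1) * k := by
    refine Nat.eq_of_mul_eq_mul_left (show 0 < l by omega) ?_
    nlinarith
  suffices R + l * k < 2 * n by omega
  have h4 : 4 * l ≤ l ^ 2 := by nlinarith
  zify [h4, (by omega : 1 ≤ l)] at hmason hn ⊢
  rcases Nat.eq_zero_or_pos k with rfl | hk1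
  · push_cast at *
    nlinarith
  · nlinarith

theorem stmt10_general {F : Type*} [Field F] (l : ℕ) (hl : l.Prime) (hl5 : 5 ≤ l)
    (hirr : Irreducible (∑ i ∈ Finset.range l, (X : Polynomial F) ^ i))
    (f g : Polynomial F) (hfg : IsCoprime f g)
    (α : F) (hα : α ≠ 0) (Ψ : Polynomial F) (hΨ : Ψ ≠ 0)
    (n : ℕ)
    (a b c d : Fin n → F) (hdet : ∀ i, a i * d i - b i * c i ≠ 0)
    (r : Fin n → ℕ) (hr : ∀ i, 1 ≤ r i)
    (heq : PhiH l f g = C α * Ψ ^ l *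
      ∏ i, (PhiH l (C (a i) * X + C (b i)) (C (c i) * X + C (d i))) ^ r i)
    (hder : derivative f ≠ 0 ∨ derivative g ≠ 0)
    (hn : 2 * n ≤ l ^ 2 - 4 * l + 1) :
    max f.natDegree g.natDegree ≤ 2 * n - 1 := by
  classical
  have hroot := geom_sum_ne_zero_of_irreducible hl (by omega) hirr
  have hlF : (l : F) ≠ 0 := by simpa using hroot 1
  obtain ⟨hf, hg⟩ := ne_zero_and_ne_zero_of_isCoprime hfg hder
  have hlead := coeff_max_natDegree_ne_zero hf hg
  have hΦ i : (PhiH l (C (a i) * X + C (b i)) (C (c i) * X + C (d i))).natDegree = l - 1 :=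
    natDegree_PhiH_linear hroot (hdet i)
  have hdeg : (l - 1) * max f.natDegree g.natDegree =
      l * Ψ.natDegree + (∑ i, r i) * (l - 1) := by
    rw [← natDegree_PhiH hroot (le_max_left _ _) (le_max_right _ _) hlead, heq,
      natDegree_C_mul_pow_mul_prod_pow hα hΨ l _
        (fun i _ => ne_zero_of_natDegree_gt (n := 0) (by rw [hΦ i]; omega)),
      sum_mul]
    simp only [hΦ]
  have hmason : l * max f.natDegree g.natDegree + 1 ≤
      3 * max f.natDegree g.natDegree + Ψ.natDegree + n * (l - 1) := by
    have h1 := mul_max_natDegree_add_one_le_radical hlF hfg hder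
    have h2 := natDegree_radical_pow_mul_pow_mul_sub_le l f g
    have h3 := natDegree_radical_C_mul_pow_mul_prod_pow_le α Ψ l univ
      (fun i => PhiH l (C (a i) * X + C (b i)) (C (c i) * X + C (d i))) r
    simp only [← heq, hΦ, sum_const, card_univ, Fintype.card_fin, smul_eq_mul] at h3
    have := natDegree_sub_le f g
    omega
  exact le_two_mul_sub_one_of_mul_add_one_le hl5
    (by simpa using sum_le_sum fun i (_ : i ∈ univ) => hr i) hdeg hmason hn

theorem stmt10 {F : Type*} [Field F] (l : ℕ) (hl : l.Prime) (hl5 : 5 ≤ l)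
    (hirr : Irreducible (∑ i ∈ Finset.range l, (X : Polynomial F) ^ i))
    (f g : Polynomial F) (hfg : IsCoprime f g)
    (hθ : 1 ≤ max f.natDegree g.natDegree)
    (α : F) (hα : α ≠ 0) (Ψ : Polynomial F) (hΨ : Ψ ≠ 0)
    (n : ℕ) (hn1 : 1 ≤ n)
    (a b c d : Fin n → F) (hdet : ∀ i, a i * d i - b i * c i ≠ 0)
    (hed : ∀ i j, i ≠ j →
      EssDistinct (a i) (b i) (c i) (d i) (a j) (b j) (c j) (d j))
    (r : Fin n → ℕ) (hr : ∀ i, 1 ≤ r i)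
    (heq : PhiH l f g = C α * Ψ ^ l *
      ∏ i, (PhiH l (C (a i) * X + C (b i)) (C (c i) * X + C (d i))) ^ r i)
    (hder : derivative f ≠ 0 ∨ derivative g ≠ 0)
    (hn : 2 * n ≤ l ^ 2 - 4 * l + 1) :
    max f.natDegree g.natDegree ≤ 2 * n - 1 :=
  stmt10_general l hl hl5 hirr f g hfg α hα Ψ hΨ n a b c d hdet r hr heq hder hn
end
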